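/- arXiv:1909.12023 — 2 statements merged into one kernel-verified Lean document; each statement's English description precedes it below -/
import Mathlib

section
/- There exist an open interval A ⊂ (π/2, π) and a natural number ℓ0, both depending only on v3, such that for every integer ℓ ≥ ℓ0 the function α ↦ 2·v3(α) + v3(β(α, γ_ℓ)) admits a unique minimizer α^us_ℓ on A, i.e. there is exactly one α^us_ℓ ∈ A with 2·v3(α^us_ℓ) + v3(β(α^us_ℓ, γ_ℓ)) ≤ 2·v3(α) + v3(β(α, γ_ℓ)) for all α ∈ A. -/
open Real Set

noncomputable section

/-- `γ_ℓ := π (1 - 1/ℓ)`. -/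
def gammaL (ℓ : ℕ) : ℝ := π * (1 - 1 / ℓ)

/-- `β(α,γ) := 2 arcsin(sin α · sin(γ/2))`. -/
def betaAngle (α γ : ℝ) : ℝ := 2 * Real.arcsin (Real.sin α * Real.sin (γ / 2))

namespace UAEU

def S (p : ℝ × ℝ) : ℝ := Real.sin (p.2 / 2)
def U (p : ℝ × ℝ) : ℝ := Real.sin p.1 * S p
def Q (p : ℝ × ℝ) : ℝ := Real.sqrt (1 - U p ^ 2)
def B (p : ℝ × ℝ) : ℝ := 2 * Real.arcsin (U p)
def P (p : ℝ × ℝ) : ℝ := 2 * (1 / Q p) * (Real.cos p.1 * S p)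
def Pd (p : ℝ × ℝ) : ℝ :=
  2 * (U p * (Real.cos p.1 * S p) / Q p / (1 - U p ^ 2)) * (Real.cos p.1 * S p)
    + 2 * (1 / Q p) * (-(Real.sin p.1) * S p)
def E (d1 d2 : ℝ → ℝ) (p : ℝ × ℝ) : ℝ :=
  2 * d2 p.1 + d2 (B p) * P p ^ 2 + d1 (B p) * Pd p

lemma U_eq (γ α : ℝ) : U (α, γ) = Real.sin α * Real.sin (γ / 2) := rfl

lemma one_sub_sq_pos {γ α : ℝ} (h : U (α, γ) ^ 2 < 1) :
    (0:ℝ) < 1 - (Real.sin α * Real.sin (γ / 2)) ^ 2 := by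
  have := h; rw [U_eq] at this; linarith

lemma Q_pos {γ α : ℝ} (h : U (α, γ) ^ 2 < 1) : 0 < Q (α, γ) :=
  Real.sqrt_pos.2 (by simpa [U_eq] using one_sub_sq_pos h)

lemma hasDerivAt_beta (γ α : ℝ) (h : U (α, γ) ^ 2 < 1) :
    HasDerivAt (fun x => betaAngle x γ) (P (α, γ)) α := by
  have h1 : U (α, γ) ≠ 1 := by intro hx; rw [hx] at h; norm_num at h
  have h2 : U (α, γ) ≠ -1 := by intro hx; rw [hx] at h; norm_num at h
  have hin : HasDerivAt (fun x : ℝ => Real.sin x * Real.sin (γ / 2))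
      (Real.cos α * Real.sin (γ / 2)) α := (Real.hasDerivAt_sin α).mul_const _
  have harc := (Real.hasDerivAt_arcsin h2 h1).comp α hin
  have key := harc.const_mul (2:ℝ)
  have hfun : (fun y => (2:ℝ) * (Real.arcsin ∘ fun x => Real.sin x * Real.sin (γ / 2)) y)
      = fun x => betaAngle x γ := by
    funext x; simp [betaAngle, Function.comp]
  rw [hfun] at key
  have hval : P (α, γ)
      = 2 * (1 / Real.sqrt (1 - U (α,γ) ^ 2) * (Real.cos α * Real.sin (γ / 2))) := by
    simp only [P, Q, U, S]; ring
  rw [hval]; exact key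

lemma hasDerivAt_P (γ α : ℝ) (h : U (α, γ) ^ 2 < 1) :
    HasDerivAt (fun x => P (x, γ)) (Pd (α, γ)) α := by
  have h1u := one_sub_sq_pos h
  have hQne : Q (α, γ) ≠ 0 := (Q_pos h).ne'
  have hu : HasDerivAt (fun x : ℝ => Real.sin x * Real.sin (γ / 2))
      (Real.cos α * Real.sin (γ / 2)) α := (Real.hasDerivAt_sin α).mul_const _
  have hy := (hu.pow 2).const_sub 1
  have hQd := (Real.hasDerivAt_sqrt h1u.ne').comp α hy
  have hinv := hQd.inv (by simpa [Q, U, S, Function.comp] using hQne)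
  have hcos := (Real.hasDerivAt_cos α).mul_const (Real.sin (γ / 2))
  have hmain := (hinv.const_mul (2:ℝ)).mul hcos
  have hfun : (fun x => (2:ℝ) * ((Real.sqrt ∘ fun x => 1 - (Real.sin x * Real.sin (γ / 2)) ^ 2) x)⁻¹
        * (Real.cos x * Real.sin (γ / 2))) = fun x => P (x, γ) := by
    funext x; simp [P, Q, U, S, Function.comp, one_div]
  rw [← hfun]
  refine hmain.congr_deriv ?_
  simp only [Pd, Q, U, S, Function.comp, Pi.pow_apply, Pi.inv_apply]
  rw [Real.sq_sqrt h1u.le]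
  have hs : Real.sqrt (1 - (Real.sin α * Real.sin (γ/2)) ^ 2) ≠ 0 := by
    simpa [Q, U, S] using hQne
  field_simp
  ring

end UAEU

namespace UAEU

lemma hasDerivAt_f {v3 d1 : ℝ → ℝ} (hv : ∀ x, HasDerivAt v3 (d1 x) x)
    (γ α : ℝ) (h : U (α, γ) ^ 2 < 1) :
    HasDerivAt (fun x => 2 * v3 x + v3 (betaAngle x γ))
      (2 * d1 α + d1 (B (α, γ)) * P (α, γ)) α := by
  have hβ := hasDerivAt_beta γ α h
  have hcomp := (hv (betaAngle α γ)).comp α hβ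
  have hBeq : B (α, γ) = betaAngle α γ := rfl
  rw [hBeq]
  exact ((hv α).const_mul 2).add (by exact hcomp)

lemma hasDerivAt_g1 {d1 d2 : ℝ → ℝ} (hd : ∀ x, HasDerivAt d1 (d2 x) x)
    (γ α : ℝ) (h : U (α, γ) ^ 2 < 1) :
    HasDerivAt (fun x => 2 * d1 x + d1 (B (x, γ)) * P (x, γ)) (E d1 d2 (α, γ)) α := by
  have hβ := hasDerivAt_beta γ α h
  have hdB : HasDerivAt (fun x => d1 (B (x, γ))) (d2 (B (α, γ)) * P (α, γ)) α := by
    have := (hd (betaAngle α γ)).comp α hβ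
    exact this
  have hP := hasDerivAt_P γ α h
  have := ((hd α).const_mul 2).add (hdB.mul hP)
  refine this.congr_deriv ?_
  simp only [E]; ring

end UAEU

namespace UAEU

lemma sin_two_pi_div_three : Real.sin (2 * π / 3) = Real.sqrt 3 / 2 := by
  rw [show (2 * π / 3 : ℝ) = π - π / 3 by ring, Real.sin_pi_sub, Real.sin_pi_div_three]

lemma cos_two_pi_div_three : Real.cos (2 * π / 3) = -(1 / 2) := by
  rw [show (2 * π / 3 : ℝ) = π - π / 3 by ring, Real.cos_pi_sub, Real.cos_pi_div_three]

lemma U_p0 : U (2 * π / 3, π) = Real.sqrt 3 / 2 := by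
  simp only [U, S]
  rw [show ((2 * π / 3, π) : ℝ × ℝ).2 / 2 = π / 2 by norm_num, Real.sin_pi_div_two,
    sin_two_pi_div_three]
  ring

lemma U_p0_sq : U (2 * π / 3, π) ^ 2 = 3 / 4 := by
  rw [U_p0, div_pow, Real.sq_sqrt (by norm_num : (3:ℝ) ≥ 0)]; norm_num

lemma U_p0_lt : U (2 * π / 3, π) ^ 2 < 1 := by rw [U_p0_sq]; norm_num

lemma Q_p0 : Q (2 * π / 3, π) = 1 / 2 := by
  rw [Q, U_p0_sq, show (1 - 3 / 4 : ℝ) = (1 / 2) ^ 2 by norm_num,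
    Real.sqrt_sq (by norm_num : (0:ℝ) ≤ 1 / 2)]

lemma B_p0 : B (2 * π / 3, π) = 2 * π / 3 := by
  have hπ := Real.pi_pos
  rw [B, U_p0, ← Real.sin_pi_div_three,
    Real.arcsin_sin (by linarith) (by linarith)]
  ring

lemma P_p0 : P (2 * π / 3, π) = -2 := by
  simp only [P, S]
  rw [Q_p0, cos_two_pi_div_three,
    show ((2 * π / 3, π) : ℝ × ℝ).2 / 2 = π / 2 by norm_num, Real.sin_pi_div_two]
  norm_num

lemma E_p0 {d1 d2 : ℝ → ℝ} (hd1c : d1 (2 * π / 3) = 0) :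
    E d1 d2 (2 * π / 3, π) = 6 * d2 (2 * π / 3) := by
  simp only [E]
  rw [B_p0, P_p0, hd1c]
  ring

lemma contE {d1 d2 : ℝ → ℝ} (h1 : Continuous d1) (h2 : Continuous d2) :
    ContinuousAt (E d1 d2) (2 * π / 3, π) := by
  have hS : Continuous S := by unfold S; fun_prop
  have hU : Continuous U := by unfold U S; fun_prop
  have hQ : Continuous Q := (continuous_const.sub (hU.pow 2)).sqrt
  have hB : Continuous B := continuous_const.mul (Real.continuous_arcsin.comp hU)
  have hQne : Q (2 * π / 3, π) ≠ 0 := by rw [Q_p0]; norm_num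
  have hcs : Continuous fun p : ℝ × ℝ => Real.cos p.1 * S p :=
    (Real.continuous_cos.comp continuous_fst).mul hS
  have hPat : ContinuousAt P (2 * π / 3, π) := by
    unfold P
    exact (continuousAt_const.mul
      (continuousAt_const.div hQ.continuousAt hQne)).mul hcs.continuousAt
  have h1mU : (1 - U (2 * π / 3, π) ^ 2) ≠ 0 := by rw [U_p0_sq]; norm_num
  have hPdat : ContinuousAt Pd (2 * π / 3, π) := by
    unfold Pd
    refine ContinuousAt.add ?_ ?_
    · refine ContinuousAt.mul (continuousAt_const.mul ?_) hcs.continuousAt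
      exact ((hU.mul hcs).continuousAt.div hQ.continuousAt hQne).div
        (continuous_const.sub (hU.pow 2)).continuousAt h1mU
    · exact (continuousAt_const.mul
        (continuousAt_const.div hQ.continuousAt hQne)).mul
        (((Real.continuous_sin.comp continuous_fst).neg.mul hS)).continuousAt
  unfold E
  refine ContinuousAt.add (ContinuousAt.add ?_ ?_) ?_
  · exact continuousAt_const.mul (h2.comp continuous_fst).continuousAt
  · exact (h2.comp hB).continuousAt.mul (hPat.pow 2)
  · exact (h1.comp hB).continuousAt.mul hPdat

end UAEU

set_option maxHeartbeats 1000000 in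
/-- There exist an open interval `A ⊂ (π/2, π)` and `ℓ0 ∈ ℕ`, depending only on
`v3`, such that for every `ℓ ≥ ℓ0` the map `α ↦ 2 v3(α) + v3(β(α, γ_ℓ))` has a unique minimizer
`α^us_ℓ` on `A`. -/
theorem unstretched_angle_exists_unique
    (v3 : ℝ → ℝ)
    (hv3_smooth : ContDiff ℝ (⊤ : ℕ∞) v3)
    (hv3_symm : ∀ α : ℝ, v3 (2 * π - α) = v3 α)
    (hv3_nonneg : ∀ α ∈ Icc (0 : ℝ) (2 * π), 0 ≤ v3 α)
    (hv3_min : v3 (2 * π / 3) = 0)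
    (hv3_min_only : ∀ α ∈ Icc (0 : ℝ) (2 * π), v3 α = 0 → α = 2 * π / 3 ∨ α = 4 * π / 3)
    (hv3_conv : 0 < iteratedDeriv 2 v3 (2 * π / 3)) :
    ∃ (a b : ℝ) (ℓ0 : ℕ), a < b ∧ Ioo a b ⊆ Ioo (π / 2) π ∧
      ∀ ℓ : ℕ, ℓ0 ≤ ℓ →
        ∃! α : ℝ, α ∈ Ioo a b ∧
          ∀ α' ∈ Ioo a b,
            2 * v3 α + v3 (betaAngle α (gammaL ℓ)) ≤
              2 * v3 α' + v3 (betaAngle α' (gammaL ℓ)) := by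
  have hπ := Real.pi_pos
  -- derivatives of v3
  have h1 : ContDiff ℝ (↑(⊤:ℕ∞)) v3 := hv3_smooth.of_le (by simp)
  obtain ⟨hvdiff, hcd1⟩ := contDiff_infty_iff_deriv.mp h1
  obtain ⟨hd1diff, hcd2⟩ := contDiff_infty_iff_deriv.mp hcd1
  set d1 := deriv v3 with hd1def
  set d2 := deriv d1 with hd2def
  have hv : ∀ x, HasDerivAt v3 (d1 x) x := fun x => (hvdiff x).hasDerivAt
  have hd : ∀ x, HasDerivAt d1 (d2 x) x := fun x => (hd1diff x).hasDerivAt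
  have hd1cont : Continuous d1 := hcd1.continuous
  have hd2cont : Continuous d2 := hcd2.continuous
  have hv3cont : Continuous v3 := hv3_smooth.continuous
  -- first derivative vanishes at the minimum
  have hd1c : d1 (2 * π / 3) = 0 := by
    have hmin : IsLocalMin v3 (2 * π / 3) := by
      have hmem : Icc (0:ℝ) (2*π) ∈ nhds (2 * π / 3) :=
        Filter.mem_of_superset (Ioo_mem_nhds (by linarith) (by linarith)) Ioo_subset_Icc_self
      filter_upwards [hmem] with x hx
      rw [hv3_min]
      exact hv3_nonneg x hx
    exact hmin.deriv_eq_zero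
  -- second derivative positive at the minimum
  have hd2c : 0 < d2 (2 * π / 3) := by
    have h2 : iteratedDeriv 2 v3 = d2 := by
      rw [hd2def, hd1def, show (2:ℕ) = 0+1+1 from rfl, iteratedDeriv_succ, iteratedDeriv_succ,
        iteratedDeriv_zero]
    rwa [h2] at hv3_conv
  -- positivity region for the second derivative
  have hGcont : ContinuousAt (fun p => min (UAEU.E d1 d2 p) (1 - UAEU.U p ^ 2)) (2 * π / 3, π) := by
    have hU : Continuous UAEU.U := by unfold UAEU.U UAEU.S; fun_prop
    exact (UAEU.contE hd1cont hd2cont).min (continuous_const.sub (hU.pow 2)).continuousAt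
  have hGpos : 0 < min (UAEU.E d1 d2 (2 * π / 3, π)) (1 - UAEU.U (2 * π / 3, π) ^ 2) := by
    rw [UAEU.E_p0 hd1c, UAEU.U_p0_sq]
    have : (0:ℝ) < 6 * d2 (2 * π / 3) := by linarith
    exact lt_min this (by norm_num)
  obtain ⟨r, hr0, hball⟩ := Metric.mem_nhds_iff.mp (hGcont (Ioi_mem_nhds hGpos))
  -- the interval
  set ε : ℝ := min (r/2) (π/12) with hεdef
  have hε0 : 0 < ε := lt_min (by linarith) (by linarith)
  have hεr : ε ≤ r/2 := min_le_left _ _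
  have hεπ : ε ≤ π/12 := min_le_right _ _
  set a' : ℝ := 2 * π / 3 - ε with ha'def
  set b' : ℝ := 2 * π / 3 + ε with hb'def
  have hab : a' < b' := by simp only [ha'def, hb'def]; linarith
  -- a', b' are points where v3 is positive
  have hv3pos : ∀ x : ℝ, π/2 < x → x < π → x ≠ 2 * π / 3 → 0 < v3 x := by
    intro x hx1 hx2 hxne
    have hmem : x ∈ Icc (0:ℝ) (2*π) := ⟨by linarith, by linarith⟩
    rcases (hv3_nonneg x hmem).lt_or_eq with h | h
    · exact h
    · exfalso
      rcases hv3_min_only x hmem h.symm with h' | h'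
      · exact hxne h'
      · rw [h'] at hx2; linarith
  have hbounds : π/2 < a' ∧ b' < π := by
    constructor <;> [simp only [ha'def]; simp only [hb'def]] <;> linarith
  -- β(x, π) and its range
  have hbeta_pi : ∀ x : ℝ, betaAngle x π = 2 * Real.arcsin (Real.sin x) := by
    intro x; rw [betaAngle, Real.sin_pi_div_two, mul_one]
  have hbeta_mem : ∀ x γ : ℝ, 0 ≤ Real.sin x * Real.sin (γ/2) →
      betaAngle x γ ∈ Icc (0:ℝ) (2*π) := by
    intro x γ hs
    constructor
    · have := Real.arcsin_nonneg.2 hs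
      rw [betaAngle]; linarith
    · have := Real.arcsin_le_pi_div_two (Real.sin x * Real.sin (γ/2))
      rw [betaAngle]; linarith
  -- value of the function at 2π/3 for γ = π
  have hbeta_c_pi : betaAngle (2 * π / 3) π = 2 * π / 3 := by
    rw [hbeta_pi, UAEU.sin_two_pi_div_three, ← Real.sin_pi_div_three,
      Real.arcsin_sin (by linarith) (by linarith)]
    ring
  -- endpoint gap function positive at π
  have hWpos : 0 < min
      ((2 * v3 a' + v3 (betaAngle a' π)) - (2 * v3 (2*π/3) + v3 (betaAngle (2*π/3) π)))
      ((2 * v3 b' + v3 (betaAngle b' π)) - (2 * v3 (2*π/3) + v3 (betaAngle (2*π/3) π))) := by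
    have hfc : 2 * v3 (2*π/3) + v3 (betaAngle (2*π/3) π) = 0 := by
      rw [hbeta_c_pi, hv3_min]; ring
    have hgap : ∀ x : ℝ, π/2 < x → x < π → x ≠ 2 * π / 3 →
        0 < 2 * v3 x + v3 (betaAngle x π) := by
      intro x h1 h2 h3
      have hvx := hv3pos x h1 h2 h3
      have hβ : betaAngle x π ∈ Icc (0:ℝ) (2*π) := by
        apply hbeta_mem
        have : 0 ≤ Real.sin x := Real.sin_nonneg_of_nonneg_of_le_pi (by linarith) h2.le
        rw [Real.sin_pi_div_two, mul_one]
        exact this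
      have := hv3_nonneg _ hβ
      linarith
    have h1 := hgap a' hbounds.1 (by simp only [ha'def]; linarith)
      (by simp only [ha'def]; intro h; nlinarith)
    have h2 := hgap b' (by simp only [hb'def]; linarith) hbounds.2
      (by simp only [hb'def]; intro h; nlinarith)
    rw [hfc]
    exact lt_min (by linarith) (by linarith)
  -- continuity in γ of the endpoint gaps
  have hWcont : ContinuousAt (fun γ => min
      ((2 * v3 a' + v3 (betaAngle a' γ)) - (2 * v3 (2*π/3) + v3 (betaAngle (2*π/3) γ)))
      ((2 * v3 b' + v3 (betaAngle b' γ)) - (2 * v3 (2*π/3) + v3 (betaAngle (2*π/3) γ)))) π := by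
    have hc : ∀ x : ℝ, Continuous fun γ => v3 (betaAngle x γ) := by
      intro x
      apply hv3cont.comp
      unfold betaAngle
      exact continuous_const.mul (Real.continuous_arcsin.comp (by fun_prop))
    exact (((continuous_const.add (hc a')).sub (continuous_const.add (hc (2*π/3)))).min
      ((continuous_const.add (hc b')).sub (continuous_const.add (hc (2*π/3))))).continuousAt
  obtain ⟨δ2, hδ20, hWball⟩ := Metric.mem_nhds_iff.mp (hWcont (Ioi_mem_nhds hWpos))
  -- choose ℓ0
  set δ' : ℝ := min (r/2) δ2 with hδ'def
  have hδ'0 : 0 < δ' := lt_min (by linarith) hδ20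
  obtain ⟨N, hN⟩ := exists_nat_gt (π / δ')
  refine ⟨a', b', N + 1, hab, ?_, ?_⟩
  · intro x hx
    exact ⟨lt_of_lt_of_le hbounds.1 hx.1.le, lt_of_le_of_lt hx.2.le hbounds.2⟩
  intro ℓ hℓ
  -- basic facts about γ = gammaL ℓ
  have hℓpos : 0 < (ℓ:ℝ) := by
    have : (1:ℕ) ≤ ℓ := le_trans (Nat.le_add_left 1 N) hℓ
    exact_mod_cast Nat.lt_of_lt_of_le Nat.zero_lt_one this
  have hγdist : dist (gammaL ℓ) π < δ' := by
    have hNℓ : π / δ' < (ℓ:ℝ) := by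
      have : (N:ℝ) + 1 ≤ (ℓ:ℝ) := by exact_mod_cast hℓ
      linarith
    have hπℓ : π / (ℓ:ℝ) < δ' := by
      rw [div_lt_iff₀ hℓpos]
      have := (div_lt_iff₀ hδ'0).mp hNℓ
      nlinarith
    have : gammaL ℓ - π = -(π / ℓ) := by rw [gammaL]; field_simp; ring
    rw [Real.dist_eq, this, abs_neg, abs_of_pos (by positivity)]
    exact hπℓ
  set γ : ℝ := gammaL ℓ with hγdef
  -- all points of [a', b'] paired with γ lie in the good ball
  have hkey : ∀ x ∈ Icc a' b',
      0 < min (UAEU.E d1 d2 (x, γ)) (1 - UAEU.U (x, γ) ^ 2) := by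
    intro x hx
    have hmem : (x, γ) ∈ Metric.ball ((2 * π / 3 : ℝ), π) r := by
      rw [Metric.mem_ball, Prod.dist_eq]
      apply max_lt
      · rw [Real.dist_eq, abs_sub_lt_iff]
        constructor <;> [have := hx.2; have := hx.1] <;>
          simp only [hb'def, ha'def] at this <;> linarith
      · exact lt_of_lt_of_le hγdist (le_trans (min_le_left _ _) (by linarith))
    exact hball hmem
  have hU2 : ∀ x ∈ Icc a' b', UAEU.U (x, γ) ^ 2 < 1 := by
    intro x hx
    have := (lt_min_iff.mp (hkey x hx)).2
    linarith
  have hEpos : ∀ x ∈ Icc a' b', 0 < UAEU.E d1 d2 (x, γ) :=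
    fun x hx => (lt_min_iff.mp (hkey x hx)).1
  set f : ℝ → ℝ := fun x => 2 * v3 x + v3 (betaAngle x γ) with hfdef
  have hfcont : Continuous f := by
    apply (continuous_const.mul hv3cont).add
    apply hv3cont.comp
    unfold betaAngle
    exact continuous_const.mul (Real.continuous_arcsin.comp (by fun_prop))
  -- second derivative of f is positive on the open slice
  have hOopen : IsOpen {x : ℝ | UAEU.U (x, γ) ^ 2 < 1} := by
    have hUc : Continuous fun x : ℝ => UAEU.U (x, γ) ^ 2 := by
      unfold UAEU.U UAEU.S; fun_prop
    exact isOpen_lt hUc continuous_const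
  have hderiv2 : ∀ x, UAEU.U (x, γ) ^ 2 < 1 → deriv (deriv f) x = UAEU.E d1 d2 (x, γ) := by
    intro x hx
    have hev : deriv f =ᶠ[nhds x]
        (fun y => 2 * d1 y + d1 (UAEU.B (y, γ)) * UAEU.P (y, γ)) := by
      filter_upwards [hOopen.mem_nhds hx] with y hy
      exact (UAEU.hasDerivAt_f hv γ y hy).deriv
    rw [hev.deriv_eq]
    exact (UAEU.hasDerivAt_g1 hd γ x hx).deriv
  have hconv : StrictConvexOn ℝ (Icc a' b') f := by
    apply strictConvexOn_of_deriv2_pos (convex_Icc a' b') hfcont.continuousOn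
    intro x hx
    rw [interior_Icc] at hx
    have hxI : x ∈ Icc a' b' := Ioo_subset_Icc_self hx
    have : deriv^[2] f = deriv (deriv f) := rfl
    rw [this, hderiv2 x (hU2 x hxI)]
    exact hEpos x hxI
  -- minimum over the closed interval
  obtain ⟨x₀, hx₀mem, hx₀min⟩ :=
    isCompact_Icc.exists_isMinOn (nonempty_Icc.mpr hab.le) hfcont.continuousOn
  have hx₀min' : ∀ y ∈ Icc a' b', f x₀ ≤ f y := fun y hy => hx₀min hy
  have hcmem : (2*π/3 : ℝ) ∈ Icc a' b' := by
    constructor <;> [simp only [ha'def]; simp only [hb'def]] <;> linarith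
  -- endpoint gaps for this γ
  have hWγ : 0 < min
      ((2 * v3 a' + v3 (betaAngle a' γ)) - (2 * v3 (2*π/3) + v3 (betaAngle (2*π/3) γ)))
      ((2 * v3 b' + v3 (betaAngle b' γ)) - (2 * v3 (2*π/3) + v3 (betaAngle (2*π/3) γ))) := by
    have : γ ∈ Metric.ball π δ2 :=
      Metric.mem_ball.mpr (lt_of_lt_of_le hγdist (min_le_right _ _))
    exact hWball this
  have hgapa : f (2*π/3) < f a' := by
    have := (lt_min_iff.mp hWγ).1; simp only [hfdef]; linarith
  have hgapb : f (2*π/3) < f b' := by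
    have := (lt_min_iff.mp hWγ).2; simp only [hfdef]; linarith
  have hfx₀c : f x₀ ≤ f (2*π/3) := hx₀min' _ hcmem
  have hx₀Ioo : x₀ ∈ Ioo a' b' := by
    constructor
    · rcases hx₀mem.1.lt_or_eq with h | h
      · exact h
      · exfalso; rw [← h] at hfx₀c; linarith
    · rcases hx₀mem.2.lt_or_eq with h | h
      · exact h
      · exfalso; rw [h] at hfx₀c; linarith
  refine ⟨x₀, ⟨hx₀Ioo, fun y hy => hx₀min' y (Ioo_subset_Icc_self hy)⟩, ?_⟩
  rintro y ⟨hyIoo, hymin⟩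
  by_contra hne
  have h1 : f y ≤ f x₀ := hymin x₀ hx₀Ioo
  have h2 : f x₀ ≤ f y := hx₀min' y (Ioo_subset_Icc_self hyIoo)
  have hmidmem : (1/2:ℝ) • y + (1/2:ℝ) • x₀ ∈ Ioo a' b' :=
    (convex_Ioo a' b') hyIoo hx₀Ioo (by norm_num) (by norm_num) (by norm_num)
  have hlt := hconv.2 (Ioo_subset_Icc_self hyIoo) (Ioo_subset_Icc_self hx₀Ioo) hne
    (by norm_num : (0:ℝ) < 1/2) (by norm_num : (0:ℝ) < 1/2) (by norm_num)
  have h3 := hymin _ hmidmem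
  simp only [smul_eq_mul] at hlt h3
  have h3' : f y ≤ f (1 / 2 * y + 1 / 2 * x₀) := h3
  have hc1 : f y < 1 / 2 * f y + 1 / 2 * f x₀ := lt_of_le_of_lt h3' hlt
  clear_value f
  linarith

end
end

section
/- Let v_1, …, v_6 ∈ ℝ³ be the vertices of a closed hexagonal polygon, i.e. v_i ≠ v_{i+1} for all i (indices modulo 6). Then the sum of the interior angles satisfies Σ_{i=1}^{6} ∠(v_{i−1}, v_i, v_{i+1}) ≤ 4π, where ∠(a, b, c) ∈ [0, π] denotes the (unsigned) angle at b between the vectors a − b and c − b; in particular, the bound 4π = (6−2)π is attained when the six points are the vertices of a convex planar hexagon. -/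
open EuclideanGeometry Real

noncomputable section

abbrev E3 : Type := EuclideanSpace ℝ (Fin 3)

noncomputable section

section VectorLemmas

variable {V : Type*} [NormedAddCommGroup V] [InnerProductSpace ℝ V]

local notation "⟪" x ", " y "⟫" => @inner ℝ _ _ x y

private lemma arccos_anti {x y : ℝ} (h : x ≤ y) : Real.arccos y ≤ Real.arccos x := by
  unfold Real.arccos
  have := Real.monotone_arcsin h
  linarith

private lemma inner_expand (x y z : V) (s t : ℝ) :
    ⟪x - s • y, z - t • y⟫ = ⟪x, z⟫ - t * ⟪x, y⟫ - s * ⟪y, z⟫ + s * t * ⟪y, y⟫ := by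
  simp only [inner_sub_left, inner_sub_right, real_inner_smul_left, real_inner_smul_right]
  ring

private lemma key_ineq {x y z : V} (hx : ‖x‖ = 1) (hy : ‖y‖ = 1) (hz : ‖z‖ = 1) :
    ⟪x, y⟫ * ⟪y, z⟫ - Real.sqrt ((1 - ⟪x, y⟫ ^ 2) * (1 - ⟪y, z⟫ ^ 2)) ≤ ⟪x, z⟫ := by
  have hyy : ⟪y, y⟫ = (1 : ℝ) := by rw [real_inner_self_eq_norm_sq, hy]; norm_num
  have hxx : ⟪x, x⟫ = (1 : ℝ) := by rw [real_inner_self_eq_norm_sq, hx]; norm_num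
  have hzz : ⟪z, z⟫ = (1 : ℝ) := by rw [real_inner_self_eq_norm_sq, hz]; norm_num
  set a : ℝ := ⟪x, y⟫ with ha
  set b : ℝ := ⟪y, z⟫ with hb
  have hinner : ⟪x - a • y, z - b • y⟫ = ⟪x, z⟫ - a * b := by
    rw [inner_expand, hyy, ← ha, ← hb]; ring
  have hx' : ‖x - a • y‖ ^ 2 = 1 - a ^ 2 := by
    rw [← real_inner_self_eq_norm_sq, inner_expand, hyy, hxx,
      show ⟪y, x⟫ = a by rw [real_inner_comm]]; ring
  have hz' : ‖z - b • y‖ ^ 2 = 1 - b ^ 2 := by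
    rw [← real_inner_self_eq_norm_sq, inner_expand, hyy, hzz,
      show ⟪z, y⟫ = b by rw [real_inner_comm],
      show ⟪y, z⟫ = b from hb.symm]; ring
  have hcs : -(‖x - a • y‖ * ‖z - b • y‖) ≤ ⟪x - a • y, z - b • y⟫ :=
    neg_le_of_abs_le (abs_real_inner_le_norm _ _)
  have hnorm : ‖x - a • y‖ * ‖z - b • y‖ = Real.sqrt ((1 - a ^ 2) * (1 - b ^ 2)) := by
    rw [← hx', ← hz', Real.sqrt_mul (sq_nonneg _), Real.sqrt_sq (norm_nonneg _),
      Real.sqrt_sq (norm_nonneg _)]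
  rw [hinner, hnorm] at hcs
  linarith

private lemma angle_triangle_unit {x y z : V} (hx : ‖x‖ = 1) (hy : ‖y‖ = 1) (hz : ‖z‖ = 1) :
    InnerProductGeometry.angle x z ≤
      InnerProductGeometry.angle x y + InnerProductGeometry.angle y z := by
  have habs : ∀ u v : V, ‖u‖ = 1 → ‖v‖ = 1 →
      InnerProductGeometry.angle u v = Real.arccos ⟪u, v⟫ := by
    intro u v hu hv
    rw [InnerProductGeometry.angle, hu, hv]; norm_num
  rcases le_or_gt π (InnerProductGeometry.angle x y + InnerProductGeometry.angle y z) with h | h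
  · exact le_trans (InnerProductGeometry.angle_le_pi _ _) h
  · have hxy1 : |⟪x, y⟫| ≤ 1 := by
      have := abs_real_inner_le_norm x y; rw [hx, hy] at this; simpa using this
    have hyz1 : |⟪y, z⟫| ≤ 1 := by
      have := abs_real_inner_le_norm y z; rw [hy, hz] at this; simpa using this
    have hcos : Real.cos (InnerProductGeometry.angle x y + InnerProductGeometry.angle y z)
        ≤ ⟪x, z⟫ := by
      rw [Real.cos_add, habs x y hx hy, habs y z hy hz,
        Real.cos_arccos (abs_le.1 hxy1).1 (abs_le.1 hxy1).2,
        Real.cos_arccos (abs_le.1 hyz1).1 (abs_le.1 hyz1).2,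
        Real.sin_arccos, Real.sin_arccos]
      have hs : Real.sqrt (1 - ⟪x, y⟫ ^ 2) * Real.sqrt (1 - ⟪y, z⟫ ^ 2)
          = Real.sqrt ((1 - ⟪x, y⟫ ^ 2) * (1 - ⟪y, z⟫ ^ 2)) :=
        (Real.sqrt_mul (by nlinarith [abs_nonneg ⟪x, y⟫, sq_abs ⟪x, y⟫]) _).symm
      rw [hs]
      exact key_ineq hx hy hz
    calc InnerProductGeometry.angle x z = Real.arccos ⟪x, z⟫ := habs x z hx hz
      _ ≤ Real.arccos (Real.cos (InnerProductGeometry.angle x y +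
            InnerProductGeometry.angle y z)) := arccos_anti hcos
      _ = _ := Real.arccos_cos
          (add_nonneg (InnerProductGeometry.angle_nonneg _ _)
            (InnerProductGeometry.angle_nonneg _ _)) (le_of_lt h)

/-- Spherical triangle inequality for unsigned angles between vectors. -/
private lemma angle_triangle (x y z : V) :
    InnerProductGeometry.angle x z ≤
      InnerProductGeometry.angle x y + InnerProductGeometry.angle y z := by
  rcases eq_or_ne x 0 with rfl | hx
  · simp only [InnerProductGeometry.angle_zero_left]
    have := InnerProductGeometry.angle_nonneg y z; linarith
  rcases eq_or_ne z 0 with rfl | hz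
  · simp only [InnerProductGeometry.angle_zero_right]
    have := InnerProductGeometry.angle_nonneg x y; linarith
  rcases eq_or_ne y 0 with rfl | hy
  · simp only [InnerProductGeometry.angle_zero_left, InnerProductGeometry.angle_zero_right]
    have := InnerProductGeometry.angle_le_pi x z; linarith
  have hnx : (0:ℝ) < ‖x‖⁻¹ := inv_pos.2 (norm_pos_iff.2 hx)
  have hny : (0:ℝ) < ‖y‖⁻¹ := inv_pos.2 (norm_pos_iff.2 hy)
  have hnz : (0:ℝ) < ‖z‖⁻¹ := inv_pos.2 (norm_pos_iff.2 hz)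
  have nx : ‖(‖x‖⁻¹ • x)‖ = 1 := norm_smul_inv_norm hx
  have ny : ‖(‖y‖⁻¹ • y)‖ = 1 := norm_smul_inv_norm hy
  have nz : ‖(‖z‖⁻¹ • z)‖ = 1 := norm_smul_inv_norm hz
  have := angle_triangle_unit nx ny nz
  simpa only [InnerProductGeometry.angle_smul_left_of_pos _ _ hnx,
    InnerProductGeometry.angle_smul_right_of_pos _ _ hny,
    InnerProductGeometry.angle_smul_right_of_pos _ _ hnz,
    InnerProductGeometry.angle_smul_left_of_pos _ _ hny] using this

end VectorLemmas

section PointLemmas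

variable {V : Type*} [NormedAddCommGroup V] [InnerProductSpace ℝ V]
variable {P : Type*} [MetricSpace P] [NormedAddTorsor V P]

/-- Subadditivity of the angle at a point. -/
private lemma angle_le_angle_add_angle (a b c d : P) : ∠ a b c ≤ ∠ a b d + ∠ d b c :=
  angle_triangle (a -ᵥ b) (d -ᵥ b) (c -ᵥ b)

/-- Angle sum of a (possibly degenerate) triangle, needing only `q ≠ r`. -/
private lemma tri_sum {q r : P} (p : P) (hqr : q ≠ r) :
    ∠ q p r + ∠ p q r + ∠ q r p = π := by
  rcases eq_or_ne p q with rfl | hpq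
  · simp [angle_self_of_ne hqr]
  rcases eq_or_ne p r with rfl | hpr
  · simp [angle_self_of_ne hpq]
  have h := EuclideanGeometry.angle_add_angle_add_angle_eq_pi (p₁ := p) (p₂ := q) (p₃ := r)
    (Ne.symm hpq)
  rw [angle_comm r p q] at h
  linarith

end PointLemmas

end

noncomputable section

/-- for the vertices `v_1, …, v_6 ∈ ℝ³` of a closed hexagonal polygon
(consecutive vertices distinct, indices mod 6) the sum of the interior angles satisfies
`Σ ∠(v_{i−1}, v_i, v_{i+1}) ≤ 4π`; in particular the bound `4π = (6−2)π` is attained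
(e.g. by a convex planar hexagon). -/
theorem hexagon_angle_sum_le_four_pi :
    (∀ v : Fin 6 → E3, (∀ i : Fin 6, v i ≠ v (i + 1)) →
      ∑ i : Fin 6, ∠ (v (i - 1)) (v i) (v (i + 1)) ≤ 4 * π) ∧
    ∃ w : Fin 6 → E3, (∀ i : Fin 6, w i ≠ w (i + 1)) ∧
      ∑ i : Fin 6, ∠ (w (i - 1)) (w i) (w (i + 1)) = 4 * π := by
  have expand : ∀ v : Fin 6 → E3, ∑ i : Fin 6, ∠ (v (i - 1)) (v i) (v (i + 1)) =
      ∠ (v 5) (v 0) (v 1) + ∠ (v 0) (v 1) (v 2) + ∠ (v 1) (v 2) (v 3) +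
      ∠ (v 2) (v 3) (v 4) + ∠ (v 3) (v 4) (v 5) + ∠ (v 4) (v 5) (v 0) := by
    intro v
    rw [Fin.sum_univ_six]
    simp only [show (0:Fin 6) - 1 = 5 by decide, show (1:Fin 6) - 1 = 0 by decide,
      show (2:Fin 6) - 1 = 1 by decide, show (3:Fin 6) - 1 = 2 by decide,
      show (4:Fin 6) - 1 = 3 by decide, show (5:Fin 6) - 1 = 4 by decide,
      show (0:Fin 6) + 1 = 1 by decide, show (1:Fin 6) + 1 = 2 by decide,
      show (2:Fin 6) + 1 = 3 by decide, show (3:Fin 6) + 1 = 4 by decide,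
      show (4:Fin 6) + 1 = 5 by decide, show (5:Fin 6) + 1 = 0 by decide]
  constructor
  · intro v hv
    have h01 : v 0 ≠ v 1 := hv 0
    have h12 : v 1 ≠ v 2 := hv 1
    have h23 : v 2 ≠ v 3 := hv 2
    have h34 : v 3 ≠ v 4 := hv 3
    have h45 : v 4 ≠ v 5 := hv 4
    have T1 := tri_sum (v 0) h12
    have T2 := tri_sum (v 0) h23
    have T3 := tri_sum (v 0) h34
    have T4 := tri_sum (v 0) h45
    have s0a : ∠ (v 5) (v 0) (v 1) ≤ ∠ (v 5) (v 0) (v 4) + ∠ (v 4) (v 0) (v 1) :=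
      _root_.angle_le_angle_add_angle _ _ _ _
    have s0b : ∠ (v 4) (v 0) (v 1) ≤ ∠ (v 4) (v 0) (v 3) + ∠ (v 3) (v 0) (v 1) :=
      _root_.angle_le_angle_add_angle _ _ _ _
    have s0c : ∠ (v 3) (v 0) (v 1) ≤ ∠ (v 3) (v 0) (v 2) + ∠ (v 2) (v 0) (v 1) :=
      _root_.angle_le_angle_add_angle _ _ _ _
    have s2 : ∠ (v 1) (v 2) (v 3) ≤ ∠ (v 1) (v 2) (v 0) + ∠ (v 0) (v 2) (v 3) :=
      _root_.angle_le_angle_add_angle _ _ _ _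
    have s3 : ∠ (v 2) (v 3) (v 4) ≤ ∠ (v 2) (v 3) (v 0) + ∠ (v 0) (v 3) (v 4) :=
      _root_.angle_le_angle_add_angle _ _ _ _
    have s4 : ∠ (v 3) (v 4) (v 5) ≤ ∠ (v 3) (v 4) (v 0) + ∠ (v 0) (v 4) (v 5) :=
      _root_.angle_le_angle_add_angle _ _ _ _
    have c1 : ∠ (v 5) (v 0) (v 4) = ∠ (v 4) (v 0) (v 5) := angle_comm _ _ _
    have c2 : ∠ (v 4) (v 0) (v 3) = ∠ (v 3) (v 0) (v 4) := angle_comm _ _ _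
    have c3 : ∠ (v 3) (v 0) (v 2) = ∠ (v 2) (v 0) (v 3) := angle_comm _ _ _
    have c4 : ∠ (v 2) (v 0) (v 1) = ∠ (v 1) (v 0) (v 2) := angle_comm _ _ _
    rw [expand]
    linarith
  · set e : E3 := EuclideanSpace.single (0 : Fin 3) (1 : ℝ) with he
    have hnorm1 : ‖e‖ = 1 := by rw [he, EuclideanSpace.norm_single]; norm_num
    have hene : e ≠ 0 := by
      intro h
      rw [h] at hnorm1
      simp at hnorm1
    have hinj : ∀ s t : ℝ, s ≠ t → s • e ≠ t • e := fun s t hst h =>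
      hst (smul_left_injective ℝ hene h)
    have hang : ∀ s t u : ℝ, ∠ (s • e) (t • e) (u • e) =
        InnerProductGeometry.angle ((s - t) • e) ((u - t) • e) := by
      intro s t u
      rw [EuclideanGeometry.angle, vsub_eq_sub, vsub_eq_sub, ← sub_smul, ← sub_smul]
    have hpi : ∀ s t u : ℝ, s < t → t < u → ∠ (s • e) (t • e) (u • e) = π := by
      intro s t u h1 h2
      rw [hang, InnerProductGeometry.angle_smul_right_of_pos _ _ (by linarith : (0:ℝ) < u - t),
        InnerProductGeometry.angle_smul_left_of_neg _ _ (by linarith : s - t < 0),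
        InnerProductGeometry.angle_neg_left, InnerProductGeometry.angle_self hene]
      ring
    have hpi' : ∀ s t u : ℝ, u < t → t < s → ∠ (s • e) (t • e) (u • e) = π := by
      intro s t u h1 h2
      rw [EuclideanGeometry.angle_comm]
      exact hpi u t s h1 h2
    refine ⟨fun i => ((![0, 1, 2, 3, 2, 1] : Fin 6 → ℕ) i : ℝ) • e, ?_, ?_⟩
    · intro i
      have hf : (![0, 1, 2, 3, 2, 1] : Fin 6 → ℕ) i ≠ (![0, 1, 2, 3, 2, 1] : Fin 6 → ℕ) (i + 1) := by
        fin_cases i <;> decide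
      exact hinj _ _ (by exact_mod_cast hf)
    · rw [expand (fun i => ((![0, 1, 2, 3, 2, 1] : Fin 6 → ℕ) i : ℝ) • e)]
      have h0 : ((![0, 1, 2, 3, 2, 1] : Fin 6 → ℕ) 0 : ℝ) = 0 := by
        rw [show (![0, 1, 2, 3, 2, 1] : Fin 6 → ℕ) 0 = 0 from by decide]; norm_num
      have h1 : ((![0, 1, 2, 3, 2, 1] : Fin 6 → ℕ) 1 : ℝ) = 1 := by
        rw [show (![0, 1, 2, 3, 2, 1] : Fin 6 → ℕ) 1 = 1 from by decide]; norm_num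
      have h2 : ((![0, 1, 2, 3, 2, 1] : Fin 6 → ℕ) 2 : ℝ) = 2 := by
        rw [show (![0, 1, 2, 3, 2, 1] : Fin 6 → ℕ) 2 = 2 from by decide]; norm_num
      have h3 : ((![0, 1, 2, 3, 2, 1] : Fin 6 → ℕ) 3 : ℝ) = 3 := by
        rw [show (![0, 1, 2, 3, 2, 1] : Fin 6 → ℕ) 3 = 3 from by decide]; norm_num
      have h4 : ((![0, 1, 2, 3, 2, 1] : Fin 6 → ℕ) 4 : ℝ) = 2 := by
        rw [show (![0, 1, 2, 3, 2, 1] : Fin 6 → ℕ) 4 = 2 from by decide]; norm_num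
      have h5 : ((![0, 1, 2, 3, 2, 1] : Fin 6 → ℕ) 5 : ℝ) = 1 := by
        rw [show (![0, 1, 2, 3, 2, 1] : Fin 6 → ℕ) 5 = 1 from by decide]; norm_num
      simp only [h0, h1, h2, h3, h4, h5]
      have a0 : ∠ ((1:ℝ) • e) ((0:ℝ) • e) ((1:ℝ) • e) = 0 :=
        angle_self_of_ne (hinj 1 0 (by norm_num))
      have a3 : ∠ ((2:ℝ) • e) ((3:ℝ) • e) ((2:ℝ) • e) = 0 :=
        angle_self_of_ne (hinj 2 3 (by norm_num))
      have a1 : ∠ ((0:ℝ) • e) ((1:ℝ) • e) ((2:ℝ) • e) = π := hpi 0 1 2 (by norm_num) (by norm_num)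
      have a2 : ∠ ((1:ℝ) • e) ((2:ℝ) • e) ((3:ℝ) • e) = π := hpi 1 2 3 (by norm_num) (by norm_num)
      have a4 : ∠ ((3:ℝ) • e) ((2:ℝ) • e) ((1:ℝ) • e) = π := hpi' 3 2 1 (by norm_num) (by norm_num)
      have a5 : ∠ ((2:ℝ) • e) ((1:ℝ) • e) ((0:ℝ) • e) = π := hpi' 2 1 0 (by norm_num) (by norm_num)
      rw [a0, a1, a2, a3, a4, a5]
      ring

end
end
end
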